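/- arXiv:1401.6061 — 5 statements merged into one kernel-verified Lean document; each statement's English description precedes it below -/
import Mathlib

section
/- Let λ ≥ 2 and κ ≥ 1 be cardinal numbers. If D(λ,κ) holds (i.e., for every set A ⊆ ωλ the κ-board Gale–Stewart game GS_λ(A,κ) is determined), then B(λ,κ) holds: for every topological space X with π-weight π(X) ≤ λ such that the κ-th power X^κ with the box product topology is a Baire space, Black has a winning strategy in the Banach–Mazur game BM(X). -/
open Cardinal Set

namespace GamePaper

universe u

/-! ### Gale–Stewart style games.
A play is a sequence `p : ℕ → M`; player ONE (resp. White) moves at even indices,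
player TWO (resp. Black) at odd indices.  A strategy for a player is a function
assigning to the finite sequence of the opponent's prior moves the player's next move. -/

/-- ONE's moves in the play `p` are obtained from the strategy `σ` applied to the
list of TWO's prior moves. -/
def OneFollows {M : Type*} (σ : List M → M) (p : ℕ → M) : Prop :=
  ∀ n : ℕ, p (2 * n) = σ (List.ofFn fun i : Fin n => p (2 * (i : ℕ) + 1))

/-- TWO's moves in the play `p` are obtained from the strategy `σ` applied to the
list of ONE's prior moves. -/
def TwoFollows {M : Type*} (σ : List M → M) (p : ℕ → M) : Prop :=
  ∀ n : ℕ, p (2 * n + 1) = σ (List.ofFn fun i : Fin (n + 1) => p (2 * (i : ℕ)))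

/-- ONE has a winning strategy in the Gale–Stewart game `GS_Λ(A)`. -/
def OneWinsGS {Λ : Type*} (A : Set (ℕ → Λ)) : Prop :=
  ∃ σ : List Λ → Λ, ∀ p : ℕ → Λ, OneFollows σ p → p ∈ A

/-- TWO has a winning strategy in the Gale–Stewart game `GS_Λ(A)`. -/
def TwoWinsGS {Λ : Type*} (A : Set (ℕ → Λ)) : Prop :=
  ∃ σ : List Λ → Λ, ∀ p : ℕ → Λ, TwoFollows σ p → p ∉ A

/-- ONE has a winning strategy in the multiboard game `GS_Λ(A, K)`:
moves are functions `K → Λ`, and ONE wins a play if on some board `ξ` the induced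
play belongs to `A`. -/
def OneWinsGSBoards (Λ K : Type*) (A : Set (ℕ → Λ)) : Prop :=
  ∃ σ : List (K → Λ) → K → Λ, ∀ q : ℕ → K → Λ, OneFollows σ q →
    ∃ ξ : K, (fun n => q n ξ) ∈ A

/-- TWO has a winning strategy in the multiboard game `GS_Λ(A, K)`. -/
def TwoWinsGSBoards (Λ K : Type*) (A : Set (ℕ → Λ)) : Prop :=
  ∃ σ : List (K → Λ) → K → Λ, ∀ q : ℕ → K → Λ, TwoFollows σ q →
    ∀ ξ : K, (fun n => q n ξ) ∉ A

/-- The multiboard Gale–Stewart game `GS_Λ(A, K)` is determined. -/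
def GSBoardsDetermined (Λ K : Type*) (A : Set (ℕ → Λ)) : Prop :=
  OneWinsGSBoards Λ K A ∨ TwoWinsGSBoards Λ K A

/-- `D(λ, κ)` : every multiboard Gale–Stewart game on `κ` boards with moves in `λ`
is determined. -/
def DProp (Λ K : Type*) : Prop :=
  ∀ A : Set (ℕ → Λ), GSBoardsDetermined Λ K A

/-! ### Laver games -/

/-- ONE wins the play `q` of the Laver game `LG(Λ, K)`. -/
def LaverWin (Λ K : Type*) (q : ℕ → K → Λ) : Prop :=
  ∀ S : Set (ℕ → Λ), ¬ TwoWinsGS S → ∃ ξ : K, (fun n => q n ξ) ∈ S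

/-- `L(λ, κ)` : ONE has a winning strategy in the Laver game `LG(Λ, K)`. -/
def OneWinsLG (Λ K : Type*) : Prop :=
  ∃ σ : List (K → Λ) → K → Λ, ∀ q : ℕ → K → Λ, OneFollows σ q → LaverWin Λ K q

/-- TWO has a winning strategy in the Laver game `LG(Λ, K)`. -/
def TwoWinsLG (Λ K : Type*) : Prop :=
  ∃ σ : List (K → Λ) → K → Λ, ∀ q : ℕ → K → Λ, TwoFollows σ q → ¬ LaverWin Λ K q

/-! ### Ulam's cut-and-choose games `UG(λ, κ)`.
White first chooses `f 0 : K → Λ`; thereafter Black chooses `(ξ (2n), f (2n+1))` and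
White responds with `(ξ (2n+1), f (2n+2))`.  White wins iff for some `α : K`,
`f n α = ξ n` for all `n`. -/

/-- A strategy for White in `UG(Λ, K)`: a first move, and a response to each finite
sequence of Black's prior moves. -/
structure UGWhiteStrategy (Λ K : Type*) where
  first : K → Λ
  move : List (Λ × (K → Λ)) → Λ × (K → Λ)

/-- White's moves in the play `(ξ, f)` of `UG(Λ, K)` follow the strategy `σ`. -/
def UGWhiteFollows {Λ K : Type*} (σ : UGWhiteStrategy Λ K) (ξ : ℕ → Λ) (f : ℕ → K → Λ) :
    Prop :=
  f 0 = σ.first ∧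
  ∀ n : ℕ, (ξ (2 * n + 1), f (2 * n + 2)) =
    σ.move (List.ofFn fun i : Fin (n + 1) => (ξ (2 * (i : ℕ)), f (2 * (i : ℕ) + 1)))

/-- `U(λ, κ)` : White has a winning strategy in the cut-and-choose game `UG(Λ, K)`. -/
def WhiteWinsUG (Λ K : Type*) : Prop :=
  ∃ σ : UGWhiteStrategy Λ K, ∀ (ξ : ℕ → Λ) (f : ℕ → K → Λ),
    UGWhiteFollows σ ξ f → ∃ α : K, ∀ n : ℕ, f n α = ξ n

/-! ### Ideals and the game `G(J)` -/

/-- `J` is an ideal of subsets: nonempty, closed under binary unions and subsets. -/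
def IsIdeal {S : Type*} (J : Set (Set S)) : Prop :=
  J.Nonempty ∧ (∀ A B : Set S, A ∈ J → B ∈ J → A ∪ B ∈ J) ∧
    ∀ A B : Set S, B ∈ J → A ⊆ B → A ∈ J

/-- `J` is atomless: every `J`-positive set splits into two disjoint `J`-positive sets. -/
def IsAtomless {S : Type*} (J : Set (Set S)) : Prop :=
  ∀ X : Set S, X ∉ J → ∃ A B : Set S, A ∪ B = X ∧ Disjoint A B ∧ A ∉ J ∧ B ∉ J

/-- Legality of White's `n`-th move in the game `G(J)` (White plays `W n`,
Black plays `B n`). -/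
def GJWhiteLegal {S : Type*} (J : Set (Set S)) (W B : ℕ → Set S) : ℕ → Prop
  | 0 => W 0 ∉ J
  | n + 1 => W (n + 1) ∉ J ∧ W (n + 1) ⊆ B n

/-- Legality of Black's `n`-th move in the game `G(J)`. -/
def GJBlackLegal {S : Type*} (J : Set (Set S)) (W B : ℕ → Set S) (n : ℕ) : Prop :=
  B n ∉ J ∧ B n ⊆ W n

/-- Black has a winning strategy in the game `G(J)`: a strategy `τ` such that in any
play in which Black follows `τ`, Black's moves are legal as long as White's have been,
and if White always moves legally then `⋂ n, B n` is nonempty. -/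
def BlackWinsGJ {S : Type*} (J : Set (Set S)) : Prop :=
  ∃ τ : List (Set S) → Set S,
    ∀ W B : ℕ → Set S,
      (∀ n : ℕ, B n = τ (List.ofFn fun i : Fin (n + 1) => W (i : ℕ))) →
      (∀ n : ℕ, (∀ k ≤ n, GJWhiteLegal J W B k) → GJBlackLegal J W B n) ∧
      ((∀ n : ℕ, GJWhiteLegal J W B n) → (⋂ n, B n).Nonempty)

/-- The ideal `J` on `K` witnesses `I(λ, κ)`: it is a proper free ideal, `λ⁺`-complete,
every positive set has a partition into `λ` many disjoint positive sets, and there is a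
dense family in `J⁺` closed under countable descending intersections (nonempty). -/
def IdealWitness (Λ K : Type*) (J : Set (Set K)) : Prop :=
  IsIdeal J ∧ J ≠ Set.univ ∧ ⋃₀ J = Set.univ ∧
  (∀ A : Λ → Set K, (∀ i, A i ∈ J) → (⋃ i, A i) ∈ J) ∧
  (∀ X : Set K, X ∉ J → ∃ P : Λ → Set K, (⋃ i, P i) = X ∧
      (∀ i j : Λ, i ≠ j → Disjoint (P i) (P j)) ∧ ∀ i, P i ∉ J) ∧
  ∃ F : Set (Set K), (∀ Y ∈ F, Y ∉ J) ∧ (∀ X : Set K, X ∉ J → ∃ Y ∈ F, Y ⊆ X) ∧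
    ∀ Xs : ℕ → Set K, (∀ n, Xs n ∈ F) → (∀ n, Xs (n + 1) ⊆ Xs n) → (⋂ n, Xs n).Nonempty

/-- `I(λ, κ)` : some ideal on `K` witnesses the above. -/
def IProp (Λ K : Type*) : Prop := ∃ J : Set (Set K), IdealWitness Λ K J

/-! ### The Banach–Mazur game and box products -/

/-- Legality of White's `n`-th move in the Banach–Mazur game (White plays the sets of
even index of the play `p`). -/
def BMWhiteLegal {X : Type*} [TopologicalSpace X] (p : ℕ → Set X) : ℕ → Prop
  | 0 => IsOpen (p 0) ∧ (p 0).Nonempty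
  | n + 1 => IsOpen (p (2 * n + 2)) ∧ (p (2 * n + 2)).Nonempty ∧ p (2 * n + 2) ⊆ p (2 * n + 1)

/-- Legality of Black's `n`-th move in the Banach–Mazur game. -/
def BMBlackLegal {X : Type*} [TopologicalSpace X] (p : ℕ → Set X) (n : ℕ) : Prop :=
  IsOpen (p (2 * n + 1)) ∧ (p (2 * n + 1)).Nonempty ∧ p (2 * n + 1) ⊆ p (2 * n)

/-- Black has a winning strategy in the Banach–Mazur game `BM(X)`: a strategy `τ` such
that in any play where Black follows `τ`, Black's moves are legal as long as White's
have been, and if White always moves legally then the intersection of the play is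
nonempty. -/
def BlackWinsBM (X : Type*) [TopologicalSpace X] : Prop :=
  ∃ τ : List (Set X) → Set X,
    ∀ p : ℕ → Set X,
      (∀ n : ℕ, p (2 * n + 1) = τ (List.ofFn fun i : Fin (n + 1) => p (2 * (i : ℕ)))) →
      (∀ n : ℕ, (∀ k ≤ n, BMWhiteLegal p k) → BMBlackLegal p n) ∧
      ((∀ n : ℕ, BMWhiteLegal p n) → (⋂ n, p n).Nonempty)

/-- The box product topology on `ι → X`: generated by boxes `∏ i, U i` with all
`U i` open. -/
def boxTopology (ι X : Type*) [TopologicalSpace X] : TopologicalSpace (ι → X) :=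
  TopologicalSpace.generateFrom
    {S : Set (ι → X) | ∃ U : ι → Set X, (∀ i, IsOpen (U i)) ∧ S = Set.pi Set.univ U}

/-- `𝓑` is a π-base for `X`: a family of nonempty open sets such that every nonempty
open set contains a member of the family. -/
def IsPiBase (X : Type*) [TopologicalSpace X] (𝓑 : Set (Set X)) : Prop :=
  (∀ V ∈ 𝓑, IsOpen V ∧ V.Nonempty) ∧
    ∀ U : Set X, IsOpen U → U.Nonempty → ∃ V ∈ 𝓑, V ⊆ U

/-! ### Interlaced sets -/

/-- `A` and `B` are interlaced: both are infinite and for some `k` the increasing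
enumerations of `A \ k` and `B \ k` satisfy `a₀ < b₀ < a₁ < b₁ < ⋯`. -/
def Interlaced (A B : Set ℕ) : Prop :=
  A.Infinite ∧ B.Infinite ∧ ∃ k : ℕ, ∀ n : ℕ,
    Nat.nth (fun m => m ∈ A ∧ k ≤ m) n < Nat.nth (fun m => m ∈ B ∧ k ≤ m) n ∧
    Nat.nth (fun m => m ∈ B ∧ k ≤ m) n < Nat.nth (fun m => m ∈ A ∧ k ≤ m) (n + 1)

/-- `B(x) = {x(2n) + x(2n+1) : n < ω, x(2n) > 0}`. -/
def Bx (x : ℕ → ℕ) : Set ℕ :=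
  {m | ∃ n : ℕ, 0 < x (2 * n) ∧ m = x (2 * n) + x (2 * n + 1)}

/-- `Y(𝓑) = {x ∈ ωω : B(x) ∉ 𝓑}`. -/
def YFam (𝓑 : Set (Set ℕ)) : Set (ℕ → ℕ) := {x | Bx x ∉ 𝓑}

/-- `B^F_i = {F(2n)(i) + F(2n+1)(i) : n < ω, F(2n)(i) > 0}` for a play `F` of `G^ω`. -/
def BF (F : ℕ → ℕ → ℕ) (i : ℕ) : Set ℕ :=
  {m | ∃ n : ℕ, 0 < F (2 * n) i ∧ m = F (2 * n) i + F (2 * n + 1) i}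

/-- `D(A,B)` : `A` or `B` is finite, or for each `k` there are `a₁ < a₂ < a₃` in `A \ k`
with no element of `B` strictly between `a₁` and `a₃`. -/
def DRel (A B : Set ℕ) : Prop :=
  A.Finite ∨ B.Finite ∨ ∀ k : ℕ, ∃ a₁ a₂ a₃ : ℕ,
    a₁ ∈ A ∧ a₂ ∈ A ∧ a₃ ∈ A ∧ k ≤ a₁ ∧ a₁ < a₂ ∧ a₂ < a₃ ∧
    ¬ ∃ b ∈ B, a₁ < b ∧ b < a₃

/-!
Code the sets of a π-base of `X` by elements of `Λ` and let `A` be the set of plays of the coded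
Banach–Mazur game won by ONE in the role of White: TWO is the first to break the rule that each
coded set lies inside the previous one, or nobody breaks it and the coded sets have empty
intersection. By `D(λ, κ)` one of the players wins `GS_λ(A, κ)`.

A winning strategy of TWO also wins on a single board, and there it is a winning strategy of Black
in `BM(X)`. A winning strategy of ONE, played on all `κ` boards at once, is a strategy of White in
the Banach–Mazur game on the box power `X^κ`. Black answers it along a tree whose levels are
maximal disjoint families of replies; these levels are dense, so the Baire property of `X^κ`
yields a point `x` and a branch of the tree through it, and ONE loses that play on every board
`ξ`, since `x ξ` lies in all the coded sets.
-/

open TopologicalSpace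

theorem ofFn_succ_eq_append {α : Type*} (f : ℕ → α) (n : ℕ) :
    (List.ofFn fun i : Fin (n + 1) => f i) = (List.ofFn fun i : Fin n => f i) ++ [f n] := by
  rw [List.ofFn_succ', List.concat_eq_append]
  rfl

def interleave {M : Type*} (e o : ℕ → M) (m : ℕ) : M :=
  if m % 2 = 0 then e (m / 2) else o (m / 2)

section Interleave

variable {M : Type*} (e o : ℕ → M) (n : ℕ)

@[simp]
theorem interleave_two_mul : interleave e o (2 * n) = e n := by
  simp [interleave]

@[simp]
theorem interleave_two_mul_add_one : interleave e o (2 * n + 1) = o n := by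
  simp [interleave, Nat.add_mod, Nat.mul_add_div]

end Interleave

theorem exists_maximal_pairwiseDisjoint {α ι : Type*} (S : Set ι) (f : ι → Set α) :
    ∃ F ⊆ S, F.PairwiseDisjoint f ∧
      ∀ i ∈ S, (∀ j ∈ F, Disjoint (f i) (f j)) → i ∈ F := by
  obtain ⟨F, ⟨hFS, hF⟩, hmax⟩ := zorn_subset {F | F ⊆ S ∧ F.PairwiseDisjoint f}
    fun c hc hchain => ⟨⋃₀ c, ⟨sUnion_subset fun F hF => (hc hF).1,
      (hchain.pairwiseDisjoint_sUnion f).2 fun F hF => (hc hF).2⟩,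
      fun _ => subset_sUnion_of_mem⟩
  refine ⟨F, hFS, hF, fun i hi hdisj => ?_⟩
  exact hmax ⟨insert_subset hi hFS, hF.insert fun j hj _ => hdisj j hj⟩ (subset_insert i F)
    (mem_insert i F)

theorem exists_mem_forall_mem_of_baireSpace {Y : Type*} [TopologicalSpace Y] [BaireSpace Y]
    {U : Set Y} (hU : IsOpen U) (hUne : U.Nonempty) {D : ℕ → Set Y} (hD : ∀ n, IsOpen (D n))
    (hdense : ∀ n O, IsOpen O → (O ∩ U).Nonempty → (O ∩ D n).Nonempty) :
    ∃ x ∈ U, ∀ n, x ∈ D n := by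
  -- Outside `closure U` there is nothing to prove, so each `D n ∪ (closure U)ᶜ` is dense.
  have hopen : ∀ n, IsOpen (D n ∪ (closure U)ᶜ) :=
    fun n => (hD n).union isClosed_closure.isOpen_compl
  have hdense' : ∀ n, Dense (D n ∪ (closure U)ᶜ) := by
    refine fun n => dense_iff_inter_open.2 fun O hO ⟨z, hz⟩ => ?_
    by_cases hOU : (O ∩ U).Nonempty
    · obtain ⟨y, hyO, hyD⟩ := hdense n O hO hOU
      exact ⟨y, hyO, Or.inl hyD⟩
    · refine ⟨z, hz, Or.inr fun hzU => hOU ?_⟩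
      exact closure_nonempty_iff.1 ⟨z, hO.inter_closure ⟨hz, hzU⟩⟩
  obtain ⟨x, hxU, hx⟩ :=
    dense_iff_inter_open.1 (dense_iInter_of_isOpen_nat hopen hdense') U hU hUne
  exact ⟨x, hxU, fun n => (mem_iInter.1 hx n).resolve_right (not_not.2 (subset_closure hxU))⟩

def BoxProduct (K X : Type*) : Type _ := K → X

instance (K X : Type*) [TopologicalSpace X] : TopologicalSpace (BoxProduct K X) :=
  boxTopology K X

namespace BoxProduct

variable {K X : Type*} [TopologicalSpace X]

theorem isOpen_pi {U : K → Set X} (hU : ∀ i, IsOpen (U i)) :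
    IsOpen (X := BoxProduct K X) (pi univ U) :=
  GenerateOpen.basic _ ⟨U, hU, rfl⟩

theorem isTopologicalBasis :
    IsTopologicalBasis (α := BoxProduct K X)
      {S | ∃ U : K → Set X, (∀ i, IsOpen (U i)) ∧ S = pi univ U} := by
  refine (isTopologicalBasis_of_subbasis_of_inter rfl ?_).of_isOpen_of_subset ?_ ?_
  · rintro _ ⟨U, hU, rfl⟩ _ ⟨V, hV, rfl⟩
    exact ⟨_, fun i => (hU i).inter (hV i), pi_inter_distrib.symm⟩
  · rintro _ ⟨U, hU, rfl⟩
    exact isOpen_pi hU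
  · rintro _ (rfl | hS)
    exacts [⟨fun _ => univ, fun _ => isOpen_univ, (pi_univ _).symm⟩, hS]

theorem exists_pi_subset {O : Set (BoxProduct K X)} (hO : IsOpen O) {x : BoxProduct K X}
    (hx : x ∈ O) : ∃ U : K → Set X, (∀ i, IsOpen (U i)) ∧ x ∈ pi univ U ∧ pi univ U ⊆ O := by
  obtain ⟨_, ⟨U, hU, rfl⟩, hxU, hUO⟩ := isTopologicalBasis.isOpen_iff.1 hO x hx
  exact ⟨U, hU, hxU, hUO⟩

end BoxProduct

section BaireTree

variable {Y G : Type*}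

def treeLevel (F : List G → Set G) : ℕ → Set (List G)
  | 0 => {[]}
  | n + 1 => {l' | ∃ l ∈ treeLevel F n, ∃ g ∈ F l, l' = l ++ [g]}

variable {R : List G → Set Y} {F : List G → Set G}

theorem eq_of_mem_treeLevel (hsub : ∀ l, ∀ g ∈ F l, R (l ++ [g]) ⊆ R l)
    (hdisj : ∀ l, (F l).PairwiseDisjoint fun g => R (l ++ [g])) {x : Y} :
    ∀ {n l l'}, l ∈ treeLevel F n → l' ∈ treeLevel F n → x ∈ R l → x ∈ R l' → l = l'
  | 0, _, _, hl, hl', _, _ => hl.trans hl'.symm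
  | n + 1, _, _, ⟨l, hl, g, hg, hlg⟩, ⟨l', hl', g', hg', hlg'⟩, hx, hx' => by
    subst hlg hlg'
    obtain rfl := eq_of_mem_treeLevel hsub hdisj hl hl' (hsub l g hg hx) (hsub l' g' hg' hx')
    obtain rfl : g = g' := (hdisj l).elim hg hg' (not_disjoint_iff.2 ⟨x, hx, hx'⟩)
    rfl

theorem exists_mem_treeLevel_inter_nonempty [TopologicalSpace Y]
    (hdense : ∀ l O, IsOpen O → (O ∩ R l).Nonempty → ∃ g ∈ F l, (O ∩ R (l ++ [g])).Nonempty)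
    {O : Set Y} (hO : IsOpen O) (hne : (O ∩ R []).Nonempty) :
    ∀ n, ∃ l ∈ treeLevel F n, (O ∩ R l).Nonempty
  | 0 => ⟨[], rfl, hne⟩
  | n + 1 => by
    obtain ⟨l, hl, hOl⟩ := exists_mem_treeLevel_inter_nonempty hdense hO hne n
    obtain ⟨g, hg, hOg⟩ := hdense l O hO hOl
    exact ⟨l ++ [g], ⟨l, hl, g, hg, rfl⟩, hOg⟩

theorem exists_branch_of_forall_mem_treeLevel (hsub : ∀ l, ∀ g ∈ F l, R (l ++ [g]) ⊆ R l)
    (hdisj : ∀ l, (F l).PairwiseDisjoint fun g => R (l ++ [g])) {x : Y}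
    (hx : ∀ n, ∃ l ∈ treeLevel F n, x ∈ R l) :
    ∃ gs : ℕ → G, ∀ n, gs n ∈ F (List.ofFn fun i : Fin n => gs i) ∧
      x ∈ R (List.ofFn fun i : Fin n => gs i) := by
  choose L hL hxL using hx
  have hstep : ∀ n, ∃ g ∈ F (L n), L (n + 1) = L n ++ [g] := by
    intro n
    obtain ⟨l, hl, g, hg, hLn⟩ := hL (n + 1)
    obtain rfl : l = L n :=
      eq_of_mem_treeLevel hsub hdisj hl (hL n) (hsub l g hg (hLn ▸ hxL (n + 1))) (hxL n)
    exact ⟨g, hg, hLn⟩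
  choose gs hgs hLgs using hstep
  have hL_eq : ∀ n, L n = List.ofFn fun i : Fin n => gs i := by
    intro n
    induction n with
    | zero => exact hL 0
    | succ n ih => rw [hLgs, ih, ofFn_succ_eq_append]
  exact ⟨gs, fun n => hL_eq n ▸ ⟨hgs n, hxL n⟩⟩

/-- In a Baire space, Black survives against any strategy of White in the Banach–Mazur game:
`R l` is White's answer to Black's moves `l`, and `leg l g` says that `g` is a legal reply. -/
theorem exists_branch_of_baireSpace [TopologicalSpace Y] [BaireSpace Y] (R : List G → Set Y)
    (leg : List G → G → Prop) (hopen : ∀ l, IsOpen (R l)) (hroot : (R []).Nonempty)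
    (hsub : ∀ l g, leg l g → R (l ++ [g]) ⊆ R l)
    (hdense : ∀ l O, IsOpen O → O.Nonempty → O ⊆ R l →
      ∃ g, leg l g ∧ (R (l ++ [g])).Nonempty ∧ R (l ++ [g]) ⊆ O) :
    ∃ (gs : ℕ → G) (x : Y), ∀ n, leg (List.ofFn fun i : Fin n => gs i) (gs n) ∧
      x ∈ R (List.ofFn fun i : Fin n => gs i) := by
  choose F hFS hFdisj hFmax using fun l =>
    exists_maximal_pairwiseDisjoint {g | leg l g ∧ (R (l ++ [g])).Nonempty} fun g => R (l ++ [g])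
  have hsubF : ∀ l, ∀ g ∈ F l, R (l ++ [g]) ⊆ R l := fun l g hg => hsub l g (hFS l hg).1
  have hdenseF : ∀ l O, IsOpen O → (O ∩ R l).Nonempty →
      ∃ g ∈ F l, (O ∩ R (l ++ [g])).Nonempty := by
    intro l O hO hOl
    obtain ⟨g, hg, ⟨y, hy⟩, hgO⟩ := hdense l _ (hO.inter (hopen l)) hOl inter_subset_right
    by_cases hgF : g ∈ F l
    · exact ⟨g, hgF, y, (hgO hy).1, hy⟩
    · obtain ⟨g', hg', hmeet⟩ : ∃ g' ∈ F l, ¬ Disjoint (R (l ++ [g])) (R (l ++ [g'])) := by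
        by_contra! h
        exact hgF (hFmax l g ⟨hg, y, hy⟩ h)
      obtain ⟨z, hz, hz'⟩ := not_disjoint_iff.1 hmeet
      exact ⟨g', hg', z, (hgO hz).1, hz'⟩
  obtain ⟨x, -, hx⟩ := exists_mem_forall_mem_of_baireSpace (hopen []) hroot
    (D := fun n => ⋃ l ∈ treeLevel F n, R l) (fun n => isOpen_biUnion fun l _ => hopen l)
    fun n O hO hne => by
      obtain ⟨l, hl, y, hyO, hyl⟩ := exists_mem_treeLevel_inter_nonempty hdenseF hO hne n
      exact ⟨y, hyO, mem_biUnion hl hyl⟩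
  obtain ⟨gs, hgs⟩ := exists_branch_of_forall_mem_treeLevel hsubF hFdisj (x := x)
    fun n => by simpa using hx n
  exact ⟨gs, x, fun n => ⟨(hFS _ (hgs n).1).1, (hgs n).2⟩⟩

end BaireTree

theorem TwoWinsGSBoards.twoWinsGS {Λ K : Type*} [Nonempty K] {A : Set (ℕ → Λ)}
    (h : TwoWinsGSBoards Λ K A) : TwoWinsGS A := by
  obtain ⟨σ, hσ⟩ := h
  obtain ⟨ξ⟩ := ‹Nonempty K›
  -- TWO copies board `ξ` of the play in which ONE repeats each of his moves on every board.
  refine ⟨fun l => σ (l.map (Function.const K)) ξ, fun p hp => ?_⟩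
  let q : ℕ → K → Λ := interleave (fun n => Function.const K (p (2 * n)))
    fun n => σ (List.ofFn fun i : Fin (n + 1) => Function.const K (p (2 * i)))
  have hqp : (fun m => q m ξ) = p := by
    funext m
    obtain ⟨n, rfl | rfl⟩ := Nat.even_or_odd' m
    · simp [q]
    · simp [q, hp n, List.map_ofFn, Function.comp_def]
  exact hqp ▸ hσ q (fun n => by simp [q]) ξ

section PiBase

variable {Λ X : Type*} [TopologicalSpace X]

theorem IsPiBase.nonempty [Nonempty X] {𝓑 : Set (Set X)}
    (h𝓑 : IsPiBase X 𝓑) : 𝓑.Nonempty :=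
  let ⟨V, hV, _⟩ := h𝓑.2 univ isOpen_univ univ_nonempty
  ⟨V, hV⟩

theorem IsPiBase.exists_code [Nonempty Λ] {b : Λ → Set X} (hb : IsPiBase X (range b)) :
    ∃ code : Set X → Λ, ∀ U, IsOpen U → U.Nonempty → b (code U) ⊆ U := by
  have hcode : ∀ U : Set X, ∃ α, IsOpen U → U.Nonempty → b α ⊆ U := by
    intro U
    by_cases hU : IsOpen U ∧ U.Nonempty
    · obtain ⟨_, ⟨α, rfl⟩, hα⟩ := hb.2 U hU.1 hU.2
      exact ⟨α, fun _ _ => hα⟩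
    · exact ⟨Classical.arbitrary Λ, fun hO hne => (hU ⟨hO, hne⟩).elim⟩
  exact Classical.axiom_of_choice hcode

end PiBase

theorem exists_isPiBase_range {Λ X : Type u} [TopologicalSpace X] [Nonempty X]
    {𝓑 : Set (Set X)} (h𝓑 : IsPiBase X 𝓑) (hcard : #𝓑 ≤ #Λ) :
    ∃ b : Λ → Set X, IsPiBase X (range b) := by
  have : Nonempty 𝓑 := h𝓑.nonempty.to_subtype
  obtain ⟨f⟩ := (Cardinal.le_def _ _).1 hcard
  refine ⟨Subtype.val ∘ Function.invFun f, ?_⟩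
  rwa [(Function.invFun_surjective f.injective).range_comp, Subtype.range_coe]

section CodedGame

variable {Λ X : Type*}

def Shrinks (b : Λ → Set X) (p : ℕ → Λ) (k : ℕ) : Prop :=
  b (p (k + 1)) ⊆ b (p k)

/-- The plays of the Banach–Mazur game on `X`, coded through `b`, that are won by ONE (in the
role of White). -/
def bmPayoff (b : Λ → Set X) : Set (ℕ → Λ) :=
  {p | (∃ n, (∀ k < 2 * n, Shrinks b p k) ∧ ¬ Shrinks b p (2 * n)) ∨
    ((∀ k, Shrinks b p k) ∧ ⋂ n, b (p n) = ∅)}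

theorem shrinks_of_not_mem_bmPayoff {b : Λ → Set X} {p : ℕ → Λ} (hp : p ∉ bmPayoff b) :
    ∀ {N}, (∀ n < N, Shrinks b p (2 * n + 1)) → ∀ k ≤ 2 * N, Shrinks b p k
  | 0, _, k, hk => by
    obtain rfl : k = 0 := by omega
    by_contra h
    exact hp (Or.inl ⟨0, by simp, h⟩)
  | N + 1, hone, k, hk => by
    have hprev : ∀ k < 2 * N + 2, Shrinks b p k := fun k hk =>
      if hkN : k ≤ 2 * N then shrinks_of_not_mem_bmPayoff hp (fun n hn => hone n (by omega)) k hkN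
      else (by omega : k = 2 * N + 1) ▸ hone N (by omega)
    by_cases hk' : k < 2 * N + 2
    · exact hprev k hk'
    · obtain rfl : k = 2 * (N + 1) := by omega
      by_contra h
      exact hp (Or.inl ⟨N + 1, hprev, h⟩)

theorem BMWhiteLegal.isOpen_nonempty [TopologicalSpace X] {p : ℕ → Set X} {n : ℕ}
    (h : BMWhiteLegal p n) : IsOpen (p (2 * n)) ∧ (p (2 * n)).Nonempty := by
  cases n
  exacts [h, ⟨h.1, h.2.1⟩]

theorem blackWinsBM_of_isEmpty [TopologicalSpace X] [IsEmpty X] : BlackWinsBM X :=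
  ⟨fun _ => ∅, fun _ _ =>
    ⟨fun n hW => ((hW 0 n.zero_le).2.ne_empty (eq_empty_of_isEmpty _)).elim,
      fun hW => ((hW 0).2.ne_empty (eq_empty_of_isEmpty _)).elim⟩⟩

theorem blackWinsBM_of_twoWinsGS [TopologicalSpace X] [Nonempty Λ] {b : Λ → Set X}
    (hb : IsPiBase X (range b)) (h : TwoWinsGS (bmPayoff b)) : BlackWinsBM X := by
  obtain ⟨τ, hτ⟩ := h
  obtain ⟨pick, hpick⟩ := hb.exists_code
  -- Black simulates the coded game in which ONE answers White's `U` by `pick U`.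
  refine ⟨fun l => b (τ (l.map pick)), fun p hp => ?_⟩
  let q : ℕ → Λ := interleave (fun n => pick (p (2 * n)))
    fun n => τ (List.ofFn fun i : Fin (n + 1) => pick (p (2 * i)))
  have hq : q ∉ bmPayoff b := hτ q fun n => by simp [q]
  have hblack : ∀ n, p (2 * n + 1) = b (q (2 * n + 1)) := fun n => by
    simp [q, hp n, List.map_ofFn, Function.comp_def]
  have hwhite : ∀ n, BMWhiteLegal p n → b (q (2 * n)) ⊆ p (2 * n) := fun n hn => by
    simpa [q] using hpick _ hn.isOpen_nonempty.1 hn.isOpen_nonempty.2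
  have hone : ∀ N, (∀ n ≤ N, BMWhiteLegal p n) → ∀ n < N, Shrinks b q (2 * n + 1) := by
    intro N hW n hn
    have hWn := hW (n + 1) hn
    calc b (q (2 * (n + 1))) ⊆ p (2 * (n + 1)) := hwhite _ hWn
      _ ⊆ p (2 * n + 1) := hWn.2.2
      _ = b (q (2 * n + 1)) := hblack n
  have hopen_ne : ∀ α, IsOpen (b α) ∧ (b α).Nonempty := fun α => hb.1 _ (mem_range_self α)
  refine ⟨fun n hW => ?_, fun hW => ?_⟩
  · rw [BMBlackLegal, hblack]
    exact ⟨(hopen_ne _).1, (hopen_ne _).2,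
      (shrinks_of_not_mem_bmPayoff hq (hone n hW) (2 * n) le_rfl).trans (hwhite n (hW n le_rfl))⟩
  · have hall : ∀ k, Shrinks b q k := fun k =>
      shrinks_of_not_mem_bmPayoff hq (hone k fun n _ => hW n) k (by omega)
    obtain ⟨x, hx⟩ : (⋂ n, b (q n)).Nonempty :=
      nonempty_iff_ne_empty.2 fun h => hq (Or.inr ⟨hall, h⟩)
    rw [mem_iInter] at hx
    refine ⟨x, mem_iInter.2 fun m => ?_⟩
    obtain ⟨n, rfl | rfl⟩ := Nat.even_or_odd' m
    · exact hwhite n (hW n) (hx _)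
    · exact (hblack n).symm ▸ hx _

end CodedGame

section OneLoses

variable {Λ K X : Type*}

open Classical in
/-- Keeps the boxes of ONE's moves nested even where `σ` breaks the rule. -/
noncomputable def legalizedMove (b : Λ → Set X) (σ : List (K → Λ) → K → Λ) (l : List (K → Λ))
    (ξ : K) : Λ :=
  match l.getLast? with
  | none => σ l ξ
  | some g => if b (σ l ξ) ⊆ b (g ξ) then σ l ξ else g ξ

variable {b : Λ → Set X} {σ : List (K → Λ) → K → Λ}

theorem legalizedMove_append_subset (l : List (K → Λ)) (g : K → Λ) (ξ : K) :
    b (legalizedMove b σ (l ++ [g]) ξ) ⊆ b (g ξ) := by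
  simp only [legalizedMove, List.getLast?_concat]
  split_ifs with h
  exacts [h, subset_rfl]

theorem legalizedMove_append_of_subset {l : List (K → Λ)} {g : K → Λ} {ξ : K}
    (h : b (σ (l ++ [g]) ξ) ⊆ b (g ξ)) : legalizedMove b σ (l ++ [g]) ξ = σ (l ++ [g]) ξ := by
  simp only [legalizedMove, List.getLast?_concat, if_pos h]

theorem exists_pi_subset_of_isPiBase [TopologicalSpace X] (hb : IsPiBase X (range b))
    {a : K → Λ} {O : Set (BoxProduct K X)} (hO : IsOpen O) (hne : O.Nonempty)
    (hOa : O ⊆ pi univ fun ξ => b (a ξ)) :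
    ∃ g : K → Λ, (∀ ξ, b (g ξ) ⊆ b (a ξ)) ∧ (pi univ fun ξ => b (g ξ)) ⊆ O := by
  obtain ⟨x, hx⟩ := hne
  obtain ⟨U, hU, hxU, hUO⟩ := BoxProduct.exists_pi_subset hO hx
  have hUa : ∀ ξ, U ξ ⊆ b (a ξ) := fun ξ =>
    (pi_subset_pi_iff.1 (hUO.trans hOa)).resolve_right (nonempty_of_mem hxU).ne_empty ξ
      (mem_univ ξ)
  choose V hV hVU using fun ξ => hb.2 (U ξ) (hU ξ) ⟨x ξ, hxU ξ (mem_univ ξ)⟩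
  choose g hg using hV
  have hgU : ∀ ξ, b (g ξ) ⊆ U ξ := fun ξ => hg ξ ▸ hVU ξ
  exact ⟨g, fun ξ => (hgU ξ).trans (hUa ξ), (pi_mono fun ξ _ => hgU ξ).trans hUO⟩

theorem not_mem_bmPayoff_of_legal {gs : ℕ → K → Λ} {x : K → X}
    (hlegal : ∀ n ξ, b (gs n ξ) ⊆ b (legalizedMove b σ (List.ofFn fun i : Fin n => gs i) ξ))
    (hx : ∀ n ξ, x ξ ∈ b (legalizedMove b σ (List.ofFn fun i : Fin n => gs i) ξ)) (ξ : K) :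
    (fun m => interleave (fun n => σ (List.ofFn fun i : Fin n => gs i)) gs m ξ) ∉ bmPayoff b := by
  set p := fun m => interleave (fun n => σ (List.ofFn fun i : Fin n => gs i)) gs m ξ
  have hp_even : ∀ n, p (2 * n) = σ (List.ofFn fun i : Fin n => gs i) ξ := fun n => by simp [p]
  have hp_odd : ∀ n, p (2 * n + 1) = gs n ξ := fun n => by simp [p]
  have hmove : ∀ n, (∀ k < 2 * n, Shrinks b p k) →
      legalizedMove b σ (List.ofFn fun i : Fin n => gs i) ξ = p (2 * n) := by
    rintro (_ | n) h
    · rfl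
    · have hn := h (2 * n + 1) (by omega)
      rw [Shrinks, show 2 * n + 1 + 1 = 2 * (n + 1) by ring, hp_even, hp_odd] at hn
      rw [hp_even, ofFn_succ_eq_append]
      exact legalizedMove_append_of_subset (ofFn_succ_eq_append gs n ▸ hn)
  rintro (⟨n, hrules, hbreak⟩ | ⟨hrules, hempty⟩)
  · apply hbreak
    rw [Shrinks, hp_odd, ← hmove n hrules]
    exact hlegal n ξ
  · have hx_even : ∀ n, x ξ ∈ b (p (2 * n)) := fun n =>
      hmove n (fun k _ => hrules k) ▸ hx n ξ
    have hmem : x ξ ∈ ⋂ m, b (p m) := by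
      refine mem_iInter.2 fun m => ?_
      obtain ⟨n, rfl | rfl⟩ := Nat.even_or_odd' m
      · exact hx_even n
      · exact hrules (2 * n + 1) (hx_even (n + 1))
    rw [hempty] at hmem
    exact hmem

theorem not_oneWinsGSBoards_bmPayoff [TopologicalSpace X] [BaireSpace (BoxProduct K X)]
    (hb : IsPiBase X (range b)) : ¬ OneWinsGSBoards Λ K (bmPayoff b) := by
  rintro ⟨σ, hσ⟩
  have hopen_ne : ∀ α, IsOpen (b α) ∧ (b α).Nonempty := fun α => hb.1 _ (mem_range_self α)
  -- ONE's legalized moves, read as boxes, are a strategy of White in `BM` on the box product.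
  let R : List (K → Λ) → Set (BoxProduct K X) := fun l =>
    pi univ fun ξ => b (legalizedMove b σ l ξ)
  have hR_ne : ∀ l, (R l).Nonempty := fun l => univ_pi_nonempty_iff.2 fun ξ => (hopen_ne _).2
  obtain ⟨gs, x, hgs⟩ := exists_branch_of_baireSpace R
    (fun l g => ∀ ξ, b (g ξ) ⊆ b (legalizedMove b σ l ξ))
    (fun l => BoxProduct.isOpen_pi fun ξ => (hopen_ne _).1) (hR_ne [])
    (fun l g hg => pi_mono fun ξ _ => (legalizedMove_append_subset l g ξ).trans (hg ξ))
    fun l O hO hne hOR => by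
      obtain ⟨g, hg, hgO⟩ := exists_pi_subset_of_isPiBase hb hO hne hOR
      exact ⟨g, hg, hR_ne _, (pi_mono fun ξ _ => legalizedMove_append_subset l g ξ).trans hgO⟩
  obtain ⟨ξ, hξ⟩ := hσ (interleave (fun n => σ (List.ofFn fun i : Fin n => gs i)) gs)
    fun n => by simp
  exact not_mem_bmPayoff_of_legal (fun n => (hgs n).1) (fun n ξ => (hgs n).2 ξ (mem_univ ξ)) ξ hξ

end OneLoses

theorem statement_0_general (Λ K : Type u) (hK : 1 ≤ #K) (hD : DProp Λ K)
    (X : Type u) [TopologicalSpace X]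
    (hπ : ∃ 𝓑 : Set (Set X), IsPiBase X 𝓑 ∧ #𝓑 ≤ #Λ)
    (hBaire : @BaireSpace (K → X) (boxTopology K X)) :
    BlackWinsBM X := by
  rcases isEmpty_or_nonempty X with _ | _
  · exact blackWinsBM_of_isEmpty
  obtain ⟨𝓑, h𝓑, hcard⟩ := hπ
  obtain ⟨b, hb⟩ := exists_isPiBase_range h𝓑 hcard
  have : Nonempty Λ := range_nonempty_iff_nonempty.1 hb.nonempty
  have : Nonempty K := mk_ne_zero_iff.1 (Cardinal.one_le_iff_ne_zero.1 hK)
  have : BaireSpace (BoxProduct K X) := hBaire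
  rcases hD (bmPayoff b) with hOne | hTwo
  · exact absurd hOne (not_oneWinsGSBoards_bmPayoff hb)
  · exact blackWinsBM_of_twoWinsGS hb hTwo.twoWinsGS

/-- Theorem (paper Thm 4): `D(λ,κ)` implies `B(λ,κ)`.  If every multiboard Gale–Stewart
game on `κ` boards with moves in `λ` is determined, then for every topological space `X`
of π-weight at most `λ` whose box power `X^κ` is Baire, Black has a winning strategy in
the Banach–Mazur game on `X`. -/
theorem statement_0 (Λ K : Type u) (hΛ : 2 ≤ #Λ) (hK : 1 ≤ #K) (hD : DProp Λ K)
    (X : Type u) [TopologicalSpace X]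
    (hπ : ∃ 𝓑 : Set (Set X), IsPiBase X 𝓑 ∧ #𝓑 ≤ #Λ)
    (hBaire : @BaireSpace (K → X) (boxTopology K X)) :
    BlackWinsBM X :=
  statement_0_general Λ K hK hD X hπ hBaire

end GamePaper
end

section
/- Let λ ≥ 2 and κ ≥ 1 be cardinals, let (f_n : n < ω) be a sequence of functions κ → λ, and set Y = {(f_n(ξ) : n < ω) : ξ < κ}. The following are equivalent: (a) for every S ⊆ ωλ such that TWO does not have a winning strategy in GS_λ(S), there exists ξ < κ such that (f_n(ξ) : n < ω) ∈ S; (b) TWO has a winning strategy in GS_λ(ωλ \ Y); (c) there is a strategy σ for TWO in the game structure GS_λ (the winning condition being unspecified) such that every play in which TWO follows σ belongs to Y. -/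
open Cardinal Set

namespace GamePaper

universe u

theorem TwoWinsGS.mono {Λ : Type*} {A B : Set (ℕ → Λ)} (hAB : A ⊆ B) :
    TwoWinsGS B → TwoWinsGS A := fun ⟨σ, hσ⟩ => ⟨σ, fun p hp hpA => hσ p hp (hAB hpA)⟩

theorem twoWinsGS_compl_iff {Λ : Type*} (A : Set (ℕ → Λ)) :
    TwoWinsGS Aᶜ ↔ ∃ σ : List Λ → Λ, ∀ p : ℕ → Λ, TwoFollows σ p → p ∈ A := by
  simp only [TwoWinsGS, mem_compl_iff, not_not]

/-- A set missing `range g` lies inside `(range g)ᶜ`, so `S = (range g)ᶜ` is the hardest case. -/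
theorem twoWinsGS_compl_range_iff {Λ K : Type*} (g : K → ℕ → Λ) :
    TwoWinsGS (range g)ᶜ ↔ ∀ S : Set (ℕ → Λ), ¬ TwoWinsGS S → ∃ ξ : K, g ξ ∈ S := by
  refine ⟨fun hTwo S hS => ?_, fun hMeets => ?_⟩
  · by_contra! hDisjoint
    refine hS (hTwo.mono ?_)
    rintro p hpS ⟨ξ, rfl⟩
    exact hDisjoint ξ hpS
  · by_contra hTwo
    obtain ⟨ξ, hξ⟩ := hMeets _ hTwo
    exact hξ (mem_range_self ξ)

theorem statement_1_general (Λ K : Type u)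
    (f : ℕ → K → Λ) (Y : Set (ℕ → Λ))
    (hY : Y = {p : ℕ → Λ | ∃ ξ : K, p = fun n => f n ξ}) :
    ((∀ S : Set (ℕ → Λ), ¬ TwoWinsGS S → ∃ ξ : K, (fun n => f n ξ) ∈ S) ↔
      TwoWinsGS Yᶜ) ∧
    (TwoWinsGS Yᶜ ↔
      ∃ σ : List Λ → Λ, ∀ p : ℕ → Λ, TwoFollows σ p → p ∈ Y) := by
  have hY_range : Y = range fun ξ n => f n ξ := by
    simp only [hY, range, eq_comm]
  rw [hY_range]
  exact ⟨(twoWinsGS_compl_range_iff _).symm, twoWinsGS_compl_iff _⟩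

/-- Lemma (paper Lemma 5): for a sequence `f` of moves and
`Y = {(f n ξ)_n : ξ : K}`, the three conditions (a), (b), (c) are equivalent. -/
theorem statement_1 (Λ K : Type u) (hΛ : 2 ≤ #Λ) (hK : 1 ≤ #K)
    (f : ℕ → K → Λ) (Y : Set (ℕ → Λ))
    (hY : Y = {p : ℕ → Λ | ∃ ξ : K, p = fun n => f n ξ}) :
    ((∀ S : Set (ℕ → Λ), ¬ TwoWinsGS S → ∃ ξ : K, (fun n => f n ξ) ∈ S) ↔
      TwoWinsGS Yᶜ) ∧
    (TwoWinsGS Yᶜ ↔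
      ∃ σ : List Λ → Λ, ∀ p : ℕ → Λ, TwoFollows σ p → p ∈ Y) :=
  statement_1_general Λ K f Y hY

end GamePaper
end

section
/- For all cardinal numbers λ ≥ 2 and κ ≥ 1, L(λ,κ) implies D(λ,κ): if ONE has a winning strategy in the Laver game LG(λ,κ), then for every set A ⊆ ωλ the κ-board Gale–Stewart game GS_λ(A,κ) is determined. -/
open Cardinal Set

namespace GamePaper

universe u

theorem TwoFollows.onBoard {Λ K : Type*} {τ : List Λ → Λ} {q : ℕ → K → Λ}
    (hq : TwoFollows (fun l ξ => τ (l.map fun f => f ξ)) q) (ξ : K) :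
    TwoFollows τ fun n => q n ξ := fun n => by
  simpa only [List.map_ofFn, Function.comp_def] using congrFun (hq n) ξ

theorem TwoWinsGS.twoWinsGSBoards {Λ : Type*} (K : Type*) {A : Set (ℕ → Λ)}
    (hA : TwoWinsGS A) : TwoWinsGSBoards Λ K A :=
  let ⟨τ, hτ⟩ := hA
  ⟨fun l ξ => τ (l.map fun f => f ξ), fun _ hq ξ => hτ _ (hq.onBoard ξ)⟩

theorem OneWinsLG.oneWinsGSBoards {Λ K : Type*} (hL : OneWinsLG Λ K) {A : Set (ℕ → Λ)}
    (hA : ¬ TwoWinsGS A) : OneWinsGSBoards Λ K A :=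
  let ⟨σ, hσ⟩ := hL
  ⟨σ, fun q hq => hσ q hq A hA⟩

theorem statement_2_general (Λ K : Type u)
    (hL : OneWinsLG Λ K) : DProp Λ K := by
  intro A
  by_cases hA : TwoWinsGS A
  · exact .inr (hA.twoWinsGSBoards K)
  · exact .inl (hL.oneWinsGSBoards hA)

/-- Theorem (paper Thm 7): `L(λ,κ)` implies `D(λ,κ)`. -/
theorem statement_2 (Λ K : Type u) (hΛ : 2 ≤ #Λ) (hK : 1 ≤ #K)
    (hL : OneWinsLG Λ K) : DProp Λ K :=
  statement_2_general Λ K hL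

end GamePaper
end

section
/- For all cardinals λ ≥ 2 and κ ≥ 1, U(λ,κ) implies L(λ,κ): if White has a winning strategy in the cut-and-choose game UG(λ,κ), then ONE has a winning strategy in the Laver game LG(λ,κ). -/
open Cardinal Set

namespace GamePaper

universe u

/-
From White's winning strategy `σ` in `UG(λ, κ)`, ONE plays on board `α` the value `σ` would cut
at `α` if Black's cuts had been TWO's previous moves and Black's choices had always been the
values `α` received ("the diagonal history of `α`").
If TWO has no winning strategy in `GS_λ(S)`, then in particular answering ONE with the choices
`σ` makes against TWO's cuts fails, so some such play `p` lies in `S`. Read as a play of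
`UG(λ, κ)` against `σ`, `p` is won by White at some `α`; as `α` agreed with all of Black's
choices, the diagonal history of `α` is `p` itself, so ONE's moves on board `α` reproduce `p`.
-/

namespace UGWhiteStrategy

variable {Λ K : Type*} (σ : UGWhiteStrategy Λ K)

def IsWinning : Prop :=
  ∀ ξ f, UGWhiteFollows σ ξ f → ∃ α, ∀ n, f n α = ξ n

def cut : List (Λ × (K → Λ)) → K → Λ
  | [] => σ.first
  | h@(_ :: _) => (σ.move h).2

def diagonalHistory (α : K) (l : List (K → Λ)) : List (Λ × (K → Λ)) :=
  l.foldl (fun h g => h ++ [(σ.cut h α, g)]) []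

def laverStrategy (l : List (K → Λ)) : K → Λ :=
  fun α => σ.cut (σ.diagonalHistory α l) α

def choiceAgainst (g : ℕ → K → Λ) (xs : List Λ) : Λ :=
  (σ.move (List.ofFn fun i : Fin xs.length => (xs[i], g i))).1

theorem cut_ofFn_succ {n : ℕ} (h : Fin (n + 1) → Λ × (K → Λ)) :
    σ.cut (List.ofFn h) = (σ.move (List.ofFn h)).2 := by
  rw [List.ofFn_succ]; rfl

theorem choiceAgainst_ofFn (g : ℕ → K → Λ) {n : ℕ} (x : Fin n → Λ) :
    σ.choiceAgainst g (List.ofFn x) = (σ.move (List.ofFn fun i : Fin n => (x i, g i))).1 := by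
  unfold choiceAgainst
  congr 2
  exact List.ext_getElem (by simp) fun i _ _ => by simp

theorem diagonalHistory_ofFn (h : ℕ → Λ × (K → Λ)) {α : K}
    (hα : ∀ n, σ.cut (List.ofFn fun i : Fin n => h i) α = (h n).1) (n : ℕ) :
    σ.diagonalHistory α (List.ofFn fun i : Fin n => (h i).2) = List.ofFn fun i : Fin n => h i := by
  induction n with
  | zero => rfl
  | succ n ih =>
    rw [List.ofFn_succ', List.ofFn_succ', diagonalHistory, List.concat_eq_append, List.foldl_append,
      ← diagonalHistory]
    simp only [Fin.val_castSucc, Fin.val_last, ih, hα, List.foldl_cons, List.foldl_nil,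
      List.concat_eq_append]

theorem ugWhiteFollows_of_cut {ξ : ℕ → Λ} {f : ℕ → K → Λ}
    (hcut : ∀ n, f (2 * n) = σ.cut (List.ofFn fun i : Fin n => (ξ (2 * i), f (2 * i + 1))))
    (hchoice : ∀ n, ξ (2 * n + 1) =
      (σ.move (List.ofFn fun i : Fin (n + 1) => (ξ (2 * i), f (2 * i + 1)))).1) :
    UGWhiteFollows σ ξ f :=
  ⟨hcut 0, fun n => Prod.ext (hchoice n) ((hcut (n + 1)).trans (σ.cut_ofFn_succ _))⟩

section Winning

variable {σ}

theorem exists_board_of_twoFollows_choiceAgainst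
    (hσ : σ.IsWinning)
    {g : ℕ → K → Λ} {p : ℕ → Λ} (hp : TwoFollows (σ.choiceAgainst g) p) :
    ∃ α, (∀ n, σ.cut (List.ofFn fun i : Fin n => (p (2 * i), g i)) α = p (2 * n)) ∧
      ∀ n, g n α = p (2 * n + 1) := by
  set f : ℕ → K → Λ :=
    Stream'.interleave (fun n => σ.cut (List.ofFn fun i : Fin n => (p (2 * i), g i))) g
  have hf_even (n : ℕ) : f (2 * n) = σ.cut (List.ofFn fun i : Fin n => (p (2 * i), g i)) :=
    Stream'.get_interleave_left n _ _
  have hf_odd (n : ℕ) : f (2 * n + 1) = g n := Stream'.get_interleave_right n _ _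
  have hfollows : UGWhiteFollows σ p f := by
    refine σ.ugWhiteFollows_of_cut (fun n => ?_) (fun n => ?_)
    · simp only [hf_even, hf_odd]
    · rw [hp n, choiceAgainst_ofFn]
      simp only [hf_odd]
  obtain ⟨α, hα⟩ := hσ p f hfollows
  exact ⟨α, fun n => (congrFun (hf_even n) α).symm.trans (hα _),
    fun n => (congrFun (hf_odd n) α).symm.trans (hα _)⟩

theorem laverWin_of_oneFollows_laverStrategy
    (hσ : σ.IsWinning)
    {q : ℕ → K → Λ} (hq : OneFollows σ.laverStrategy q) : LaverWin Λ K q := by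
  intro S hS
  set g : ℕ → K → Λ := fun n => q (2 * n + 1)
  obtain ⟨p, hp, hpS⟩ : ∃ p, TwoFollows (σ.choiceAgainst g) p ∧ p ∈ S := by
    by_contra! h
    exact hS ⟨_, h⟩
  obtain ⟨α, hcut, hg⟩ := exists_board_of_twoFollows_choiceAgainst hσ hp
  refine ⟨α, ?_⟩
  convert hpS using 1
  funext m
  obtain ⟨n, rfl | rfl⟩ := Nat.even_or_odd' m
  · rw [hq n]
    show σ.cut (σ.diagonalHistory α (List.ofFn fun i : Fin n => g i)) α = p (2 * n)
    rw [σ.diagonalHistory_ofFn (fun i => (p (2 * i), g i)) hcut, hcut]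
  · exact hg n

end Winning

end UGWhiteStrategy

theorem statement_6_general (Λ K : Type u) (hU : WhiteWinsUG Λ K) : OneWinsLG Λ K := by
  obtain ⟨σ, hσ⟩ := hU
  exact ⟨σ.laverStrategy, fun _ => UGWhiteStrategy.laverWin_of_oneFollows_laverStrategy hσ⟩

/-- Theorem (paper Thm 11): `U(λ,κ)` implies `L(λ,κ)`. -/
theorem statement_6 (Λ K : Type u) (hΛ : 2 ≤ #Λ) (hK : 1 ≤ #K)
    (hU : WhiteWinsUG Λ K) : OneWinsLG Λ K :=
  statement_6_general Λ K hU

end GamePaper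
end

section
/- If κ is an infinite cardinal and there is an atomless proper ideal J on κ such that Black has a winning strategy in the game G(J), then White has a winning strategy in the cut-and-choose game UG(ℵ0,κ). -/
open Cardinal Set

namespace GamePaper

universe u

/-!
While playing `UG(ℵ₀, κ)`, White runs Black's winning strategy `τ` for `G(J)` in the
background, keeping the list `L` of her own moves in `G(J)`. Her cut is a partition of Black's
current set `τ L` into countably many `J`-positive fibers (atomlessness), and when Black chooses
a fiber, White plays it in `G(J)`. To answer Black's cut `g`, White plays `τ L \ g⁻¹{m}` for
`m = 0, 1, …` as long as the fiber `τ L ∩ g⁻¹{m}` lies in `J`. This stops at some `m` with a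
positive fiber, for otherwise Black's winning strategy would produce a point lying in no fiber
of `g`; White chooses that `m` and plays the fiber. All of White's moves in `G(J)` are legal, so
the point produced by `τ` at the end lies in every fiber chosen by either player.
-/

section Ideal

variable {K : Type*} {J : Set (Set K)}

theorem IsIdeal.mem_of_subset (hJ : IsIdeal J) {A B : Set K} (hB : B ∈ J) (hAB : A ⊆ B) :
    A ∈ J :=
  hJ.2.2 A B hB hAB

theorem IsIdeal.diff_notMem (hJ : IsIdeal J) {X Y : Set K} (hX : X ∉ J) (hXY : X ∩ Y ∈ J) :
    X \ Y ∉ J := fun h =>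
  hX (hJ.mem_of_subset (hJ.2.1 _ _ h hXY) (sdiff_union_inter X Y).ge)

theorem IsIdeal.univ_notMem (hJ : IsIdeal J) (hproper : J ≠ Set.univ) : Set.univ ∉ J := fun h =>
  hproper (eq_univ_of_forall fun A => hJ.mem_of_subset h (subset_univ A))

theorem sSup_setOf_mem_of_antitone {s : ℕ → Set K} (hs : Antitone s) {α : K} {n : ℕ}
    (hn : α ∈ s n) (hn' : α ∉ s (n + 1)) : sSup {m | α ∈ s m} = n := by
  have hIic : {m | α ∈ s m} = Iic n := by
    ext m
    refine ⟨fun hm => ?_, fun hm => hs hm hn⟩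
    by_contra hlt
    exact hn' (hs (Nat.succ_le_of_lt (not_le.1 hlt)) hm)
  rw [hIic, csSup_Iic]

-- Peel positive pieces `A (s n)` off `s n` forever; `f α` is the last `n` with `α ∈ s n`.
theorem IsAtomless.exists_fibers_notMem (hJ : IsIdeal J) (hA : IsAtomless J) {X : Set K}
    (hX : X ∉ J) : ∃ f : K → ℕ, ∀ n, X ∩ f ⁻¹' {n} ∉ J := by
  choose! A B hunion hdisj hApos hBpos using hA
  set s : ℕ → Set K := fun n => B^[n] X
  have hsucc : ∀ n, s (n + 1) = B (s n) := fun n => Function.iterate_succ_apply' B n X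
  have hpos : ∀ n, s n ∉ J := by
    intro n
    induction n with
    | zero => exact hX
    | succ n ih => rw [hsucc]; exact hBpos _ ih
  have hs : Antitone s := antitone_nat_of_succ_le fun n => by
    rw [hsucc]; exact subset_union_right.trans (hunion _ (hpos n)).subset
  refine ⟨fun α => sSup {m | α ∈ s m},
    fun n hn => hApos _ (hpos n) (hJ.mem_of_subset hn ?_)⟩
  intro α hα
  have hαs : α ∈ s n := hunion _ (hpos n) ▸ Or.inl hα
  refine ⟨hs (Nat.zero_le n) hαs, sSup_setOf_mem_of_antitone hs hαs ?_⟩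
  rw [hsucc]
  exact disjoint_left.1 (hdisj _ (hpos n)) hα

noncomputable def positiveFiberMap (J : Set (Set K)) (X : Set K) : K → ℕ :=
  Classical.epsilon fun f : K → ℕ => ∀ n, X ∩ f ⁻¹' {n} ∉ J

theorem positiveFiberMap_spec (hJ : IsIdeal J) (hA : IsAtomless J) {X : Set K} (hX : X ∉ J)
    (n : ℕ) : X ∩ positiveFiberMap J X ⁻¹' {n} ∉ J :=
  Classical.epsilon_spec (hA.exists_fibers_notMem hJ hX) n

end Ideal

theorem List.ofFn_prefix_ofFn {α : Type*} (W : ℕ → α) {k n : ℕ} (h : k ≤ n) :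
    (List.ofFn fun i : Fin k => W i) <+: List.ofFn fun i : Fin n => W i := by
  induction n, h using Nat.le_induction with
  | base => exact List.prefix_rfl
  | succ n _ ih => exact ih.trans (by rw [List.ofFn_succ_last]; exact List.prefix_append _ _)

section Positions

variable {K : Type*} {J : Set (Set K)} {τ : List (Set K) → Set K}

def IsBlackWinningGJ (J : Set (Set K)) (τ : List (Set K) → Set K) : Prop :=
  ∀ W B : ℕ → Set K,
    (∀ n : ℕ, B n = τ (List.ofFn fun i : Fin (n + 1) => W (i : ℕ))) →
    (∀ n : ℕ, (∀ k ≤ n, GJWhiteLegal J W B k) → GJBlackLegal J W B n) ∧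
    ((∀ n : ℕ, GJWhiteLegal J W B n) → (⋂ n, B n).Nonempty)

-- A position of `G(J)` is the list of White's moves; Black's moves are the replies of `τ`.
def IsLegalGJPosition (J : Set (Set K)) (τ : List (Set K) → Set K) (L : List (Set K)) : Prop :=
  ∀ l X, l ++ [X] <+: L → X ∉ J ∧ (l ≠ [] → X ⊆ τ l)

theorem isLegalGJPosition_nil : IsLegalGJPosition J τ [] := fun l X h => by
  simp at h

theorem IsLegalGJPosition.concat {L : List (Set K)} (hL : IsLegalGJPosition J τ L) {X : Set K}
    (hX : X ∉ J) (hXτ : L ≠ [] → X ⊆ τ L) : IsLegalGJPosition J τ (L ++ [X]) := by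
  intro l Y h
  rcases List.prefix_concat_iff.1 h with h | h
  · obtain ⟨rfl, rfl⟩ : l = L ∧ Y = X := by simpa using List.append_inj' h rfl
    exact ⟨hX, hXτ⟩
  · exact hL l Y h

theorem isLegalGJPosition_singleton {X : Set K} (hX : X ∉ J) : IsLegalGJPosition J τ [X] :=
  isLegalGJPosition_nil.concat hX fun h => absurd rfl h

theorem IsLegalGJPosition.of_prefix {L L' : List (Set K)} (hL : IsLegalGJPosition J τ L)
    (h : L' <+: L) : IsLegalGJPosition J τ L' :=
  fun l X hl => hL l X (hl.trans h)

theorem IsLegalGJPosition.gjWhiteLegal {W : ℕ → Set K} {n : ℕ}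
    (hW : IsLegalGJPosition J τ (List.ofFn fun i : Fin (n + 1) => W i)) :
    GJWhiteLegal J W (fun m => τ (List.ofFn fun i : Fin (m + 1) => W i)) n := by
  rw [List.ofFn_succ_last] at hW
  obtain ⟨hn, hnτ⟩ := hW _ _ List.prefix_rfl
  cases n with
  | zero => exact hn
  | succ n => exact ⟨hn, hnτ (by simp)⟩

theorem IsBlackWinningGJ.gjBlackLegal (hτ : IsBlackWinningGJ J τ) {W : ℕ → Set K} {n : ℕ}
    (hW : IsLegalGJPosition J τ (List.ofFn fun i : Fin (n + 1) => W i)) :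
    GJBlackLegal J W (fun m => τ (List.ofFn fun i : Fin (m + 1) => W i)) n :=
  (hτ W _ fun _ => rfl).1 n fun _ hk =>
    (hW.of_prefix (List.ofFn_prefix_ofFn W (Nat.succ_le_succ hk))).gjWhiteLegal

theorem IsBlackWinningGJ.reply_notMem (hτ : IsBlackWinningGJ J τ) {L : List (Set K)}
    (hL : IsLegalGJPosition J τ L) (hne : L ≠ []) : τ L ∉ J := by
  obtain ⟨n, hn⟩ : ∃ n, L.length = n + 1 :=
    Nat.exists_eq_succ_of_ne_zero (List.length_pos_iff.2 hne).ne'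
  have hL' : L = List.ofFn fun i : Fin (n + 1) => L.getD i ∅ :=
    List.ext_getElem (by simp [hn]) fun i hi _ => by
      rw [List.getElem_ofFn, List.getD_eq_getElem _ _ hi]
  rw [hL'] at hL ⊢
  exact (hτ.gjBlackLegal (W := fun i => L.getD i ∅) hL).1

theorem IsBlackWinningGJ.exists_mem_of_legal (hτ : IsBlackWinningGJ J τ) {W : ℕ → Set K}
    (hW : ∀ n, IsLegalGJPosition J τ (List.ofFn fun i : Fin n => W i)) :
    ∃ α, ∀ n, α ∈ W n := by
  obtain ⟨α, hα⟩ := (hτ W _ fun _ => rfl).2 fun n => (hW (n + 1)).gjWhiteLegal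
  exact ⟨α, fun n => (hτ.gjBlackLegal (hW (n + 1))).2 (mem_iInter.1 hα n)⟩

theorem IsBlackWinningGJ.exists_mem_of_chain (hτ : IsBlackWinningGJ J τ)
    {Ls : ℕ → List (Set K)} (hlegal : ∀ n, IsLegalGJPosition J τ (Ls n))
    (hpre : ∀ n, Ls n <+: Ls (n + 1)) (hlen : ∀ n, n < (Ls n).length) :
    ∃ α, ∀ n, ∀ X ∈ Ls n, α ∈ X := by
  have hmono : ∀ {m n}, m ≤ n → Ls m <+: Ls n := fun {m n} h => by
    induction n, h using Nat.le_induction with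
    | base => exact List.prefix_rfl
    | succ n _ ih => exact ih.trans (hpre n)
  set W : ℕ → Set K := fun i => (Ls (i + 1))[i]'(Nat.lt_of_succ_lt (hlen (i + 1)))
  have hW : ∀ n i (hi : i < (Ls n).length), (Ls n)[i] = W i := by
    intro n i hi
    rcases le_total n (i + 1) with h | h
    · exact (hmono h).getElem hi
    · exact ((hmono h).getElem _).symm
  have hWlegal : ∀ n, IsLegalGJPosition J τ (List.ofFn fun i : Fin n => W i) := by
    intro n
    refine (hlegal n).of_prefix (List.prefix_iff_eq_take.2 ?_)
    refine List.ext_getElem (by simpa using (hlen n).le) fun i _ _ => ?_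
    simp [hW]
  obtain ⟨α, hα⟩ := hτ.exists_mem_of_legal hWlegal
  refine ⟨α, fun n X hX => ?_⟩
  obtain ⟨i, hi, rfl⟩ := List.mem_iff_getElem.1 hX
  exact hW n i hi ▸ hα i

end Positions

section Search

variable {K : Type*} {J : Set (Set K)} {τ : List (Set K) → Set K}

def avoidingExtension (τ : List (Set K) → Set K) (g : K → ℕ) (L : List (Set K)) :
    ℕ → List (Set K)
  | 0 => L
  | m + 1 => avoidingExtension τ g L m ++ [τ (avoidingExtension τ g L m) \ g ⁻¹' {m}]

theorem length_avoidingExtension (g : K → ℕ) (L : List (Set K)) (m : ℕ) :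
    (avoidingExtension τ g L m).length = L.length + m := by
  induction m with
  | zero => rfl
  | succ m ih => simp [avoidingExtension, ih, Nat.add_assoc]

theorem prefix_avoidingExtension (g : K → ℕ) (L : List (Set K)) (m : ℕ) :
    L <+: avoidingExtension τ g L m := by
  induction m with
  | zero => exact List.prefix_rfl
  | succ m ih => exact ih.trans (List.prefix_append _ _)

theorem IsBlackWinningGJ.isLegal_avoidingExtension (hτ : IsBlackWinningGJ J τ) (hJ : IsIdeal J)
    {g : K → ℕ} {L : List (Set K)} (hL : IsLegalGJPosition J τ L) (hne : L ≠ []) {m : ℕ}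
    (hfib : ∀ k < m, τ (avoidingExtension τ g L k) ∩ g ⁻¹' {k} ∈ J) :
    IsLegalGJPosition J τ (avoidingExtension τ g L m) := by
  induction m with
  | zero => exact hL
  | succ m ih =>
    have hm := ih fun k hk => hfib k (Nat.lt_succ_of_lt hk)
    have hτm := hτ.reply_notMem hm ((prefix_avoidingExtension g L m).ne_nil hne)
    exact hm.concat (hJ.diff_notMem hτm (hfib m m.lt_succ_self)) fun _ => sdiff_subset

theorem IsBlackWinningGJ.exists_fiber_notMem (hτ : IsBlackWinningGJ J τ) (hJ : IsIdeal J)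
    (g : K → ℕ) {L : List (Set K)} (hL : IsLegalGJPosition J τ L) (hne : L ≠ []) :
    ∃ m, τ (avoidingExtension τ g L m) ∩ g ⁻¹' {m} ∉ J := by
  by_contra! hfib
  obtain ⟨α, hα⟩ := hτ.exists_mem_of_chain
    (fun m => hτ.isLegal_avoidingExtension hJ hL hne fun k _ => hfib k)
    (fun m => List.prefix_append _ _)
    (fun m => by
      rw [length_avoidingExtension]
      exact Nat.lt_add_of_pos_left (List.length_pos_iff.2 hne))
  exact (hα (g α + 1) (τ (avoidingExtension τ g L (g α)) \ g ⁻¹' {g α})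
    (by simp [avoidingExtension])).2 rfl

noncomputable def fiberStop (J : Set (Set K)) (τ : List (Set K) → Set K) (g : K → ℕ)
    (L : List (Set K)) : ℕ :=
  sInf {m | τ (avoidingExtension τ g L m) ∩ g ⁻¹' {m} ∉ J}

noncomputable def answerCut (J : Set (Set K)) (τ : List (Set K) → Set K) (g : K → ℕ)
    (L : List (Set K)) : ℕ × List (Set K) :=
  (fiberStop J τ g L, avoidingExtension τ g L (fiberStop J τ g L) ++
    [τ (avoidingExtension τ g L (fiberStop J τ g L)) ∩ g ⁻¹' {fiberStop J τ g L}])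

theorem prefix_answerCut (g : K → ℕ) (L : List (Set K)) : L <+: (answerCut J τ g L).2 :=
  (prefix_avoidingExtension g L _).trans (List.prefix_append _ _)

theorem exists_mem_answerCut_subset (g : K → ℕ) (L : List (Set K)) :
    ∃ Y ∈ (answerCut J τ g L).2, Y ⊆ g ⁻¹' {(answerCut J τ g L).1} :=
  ⟨_, List.mem_append_right _ (List.mem_singleton_self _), inter_subset_right⟩

theorem IsBlackWinningGJ.isLegal_answerCut (hτ : IsBlackWinningGJ J τ) (hJ : IsIdeal J)
    (g : K → ℕ) {L : List (Set K)} (hL : IsLegalGJPosition J τ L) (hne : L ≠ []) :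
    IsLegalGJPosition J τ (answerCut J τ g L).2 := by
  have hstop := Nat.sInf_mem (hτ.exists_fiber_notMem hJ g hL hne)
  refine (hτ.isLegal_avoidingExtension hJ hL hne fun k hk => ?_).concat hstop
    fun _ => inter_subset_left
  by_contra h
  exact Nat.notMem_of_lt_sInf hk h

end Search

section Transducer

variable {Λ K S : Type*}

-- `a₀` is never used: White's `move` is only consulted after a move of Black.
def UGWhiteStrategy.ofStep (a₀ : Λ) (s₀ : S) (cut : S → K → Λ)
    (step : S → Λ × (K → Λ) → Λ × S) : UGWhiteStrategy Λ K where
  first := cut s₀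
  move l :=
    let r := l.foldl (fun r p => step r.2 p) (a₀, s₀)
    (r.1, cut r.2)

theorem UGWhiteStrategy.exists_states_of_follows {a₀ : Λ} {s₀ : S} {cut : S → K → Λ}
    {step : S → Λ × (K → Λ) → Λ × S} {ξ : ℕ → Λ} {f : ℕ → K → Λ}
    (h : UGWhiteFollows (ofStep a₀ s₀ cut step) ξ f) :
    ∃ s : ℕ → S, s 0 = s₀ ∧ (∀ n, f (2 * n) = cut (s n)) ∧
      ∀ n, step (s n) (ξ (2 * n), f (2 * n + 1)) = (ξ (2 * n + 1), s (n + 1)) := by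
  set r : ℕ → Λ × S := fun n =>
    (List.ofFn fun i : Fin n => (ξ (2 * i), f (2 * i + 1))).foldl
      (fun r p => step r.2 p) (a₀, s₀)
  have hr : ∀ n, r (n + 1) = step (r n).2 (ξ (2 * n), f (2 * n + 1)) := fun n => by
    simp only [r, List.ofFn_succ_last, List.foldl_append, List.foldl_cons, List.foldl_nil,
      Fin.val_castSucc, Fin.val_last]
  have hmove : ∀ n, (ξ (2 * n + 1), f (2 * n + 2)) = ((r (n + 1)).1, cut (r (n + 1)).2) := h.2
  refine ⟨fun n => (r n).2, rfl, fun n => ?_, fun n => ?_⟩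
  · cases n with
    | zero => exact h.1
    | succ n => exact (Prod.ext_iff.1 (hmove n)).2
  · rw [← hr]
    exact Prod.ext (Prod.ext_iff.1 (hmove n)).1.symm rfl

end Transducer

section Strategy

variable {K : Type*} {J : Set (Set K)} {τ : List (Set K) → Set K}

noncomputable def ugStep (J : Set (Set K)) (τ : List (Set K) → Set K) (L : List (Set K))
    (p : ℕ × (K → ℕ)) : ℕ × List (Set K) :=
  answerCut J τ p.2 (L ++ [τ L ∩ positiveFiberMap J (τ L) ⁻¹' {p.1}])

theorem prefix_ugStep (L : List (Set K)) (p : ℕ × (K → ℕ)) :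
    L ++ [τ L ∩ positiveFiberMap J (τ L) ⁻¹' {p.1}] <+: (ugStep J τ L p).2 :=
  prefix_answerCut _ _

theorem exists_mem_ugStep_subset (L : List (Set K)) (p : ℕ × (K → ℕ)) :
    ∃ Y ∈ (ugStep J τ L p).2, Y ⊆ p.2 ⁻¹' {(ugStep J τ L p).1} :=
  exists_mem_answerCut_subset _ _

theorem IsBlackWinningGJ.isLegal_ugStep (hτ : IsBlackWinningGJ J τ) (hJ : IsIdeal J)
    (hA : IsAtomless J) {L : List (Set K)} (hL : IsLegalGJPosition J τ L) (hne : L ≠ [])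
    (p : ℕ × (K → ℕ)) : IsLegalGJPosition J τ (ugStep J τ L p).2 :=
  hτ.isLegal_answerCut hJ p.2
    (hL.concat (positiveFiberMap_spec hJ hA (hτ.reply_notMem hL hne) p.1)
      fun _ => inter_subset_left)
    (List.concat_ne_nil _ _)

theorem IsBlackWinningGJ.exists_mem_of_ugStep (hτ : IsBlackWinningGJ J τ) (hJ : IsIdeal J)
    (hA : IsAtomless J) (hproper : J ≠ Set.univ) {Ls : ℕ → List (Set K)}
    {p : ℕ → ℕ × (K → ℕ)} (h0 : Ls 0 = [Set.univ])
    (hnext : ∀ n, (ugStep J τ (Ls n) (p n)).2 = Ls (n + 1)) :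
    ∃ α, ∀ n, ∀ X ∈ Ls n, α ∈ X := by
  have hpre : ∀ n, Ls n ++ [τ (Ls n) ∩ positiveFiberMap J (τ (Ls n)) ⁻¹' {(p n).1}]
      <+: Ls (n + 1) := fun n => hnext n ▸ prefix_ugStep (Ls n) (p n)
  have hlegal : ∀ n, IsLegalGJPosition J τ (Ls n) ∧ Ls n ≠ [] := by
    intro n
    induction n with
    | zero => exact h0 ▸ ⟨isLegalGJPosition_singleton (hJ.univ_notMem hproper), by simp⟩
    | succ n ih =>
      exact ⟨hnext n ▸ hτ.isLegal_ugStep hJ hA ih.1 ih.2 _, (hpre n).ne_nil (by simp)⟩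
  have hlen : ∀ n, n < (Ls n).length := by
    intro n
    induction n with
    | zero => simp [h0]
    | succ n ih =>
      have := (hpre n).length_le
      simp only [List.length_append, List.length_singleton] at this
      omega
  exact hτ.exists_mem_of_chain (fun n => (hlegal n).1)
    (fun n => (List.prefix_append _ _).trans (hpre n)) hlen

end Strategy

theorem statement_9_general (K : Type u) (J : Set (Set K))
    (hIdeal : IsIdeal J) (hproper : J ≠ Set.univ) (hatomless : IsAtomless J)
    (hBlack : BlackWinsGJ J) : WhiteWinsUG ℕ K := by
  obtain ⟨τ, hτ⟩ : ∃ τ, IsBlackWinningGJ J τ := hBlack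
  refine ⟨.ofStep 0 [Set.univ] (fun L => positiveFiberMap J (τ L)) (ugStep J τ),
    fun ξ f hf => ?_⟩
  obtain ⟨Ls, h0, hcut, hstep⟩ := UGWhiteStrategy.exists_states_of_follows hf
  obtain ⟨α, hα⟩ := hτ.exists_mem_of_ugStep hIdeal hatomless hproper h0
    fun n => congrArg Prod.snd (hstep n)
  refine ⟨α, fun k => ?_⟩
  obtain ⟨n, rfl | rfl⟩ := Nat.even_or_odd' k
  · have hX := (prefix_ugStep (J := J) (τ := τ) (Ls n) (ξ (2 * n), f (2 * n + 1))).subset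
      (List.mem_append_right _ (List.mem_singleton_self _))
    rw [hstep n] at hX
    rw [hcut]
    exact (hα (n + 1) _ hX).2
  · obtain ⟨Y, hY, hYg⟩ :=
      exists_mem_ugStep_subset (J := J) (τ := τ) (Ls n) (ξ (2 * n), f (2 * n + 1))
    rw [hstep n] at hY hYg
    exact hYg (hα (n + 1) Y hY)

/-- Theorem (Baumgartner, paper Thm 14): if there is an atomless proper ideal `J` on the
infinite cardinal `κ` such that Black has a winning strategy in `G(J)`, then White has
a winning strategy in `UG(ℵ₀,κ)`. -/
theorem statement_9 (K : Type u) [Infinite K] (J : Set (Set K))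
    (hIdeal : IsIdeal J) (hproper : J ≠ Set.univ) (hatomless : IsAtomless J)
    (hBlack : BlackWinsGJ J) : WhiteWinsUG ℕ K :=
  statement_9_general K J hIdeal hproper hatomless hBlack

end GamePaper
end
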